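/- Let f ∈ ℝ[x₁,…,xₙ] be a polynomial that has a global minimizer x* over [0,1]^n all of whose coordinates are rational. Then there exist a constant M'_f > 0 and an integer k₁ ≥ 1 (depending only on f and x*) such that f_k^H − f(x*) ≤ M'_f/k for all integers k ≥ k₁. -/

import Mathlib

open MvPolynomial MeasureTheory


noncomputable def Bnat (a b : ℕ) : ℝ :=
  (a.factorial : ℝ) * (b.factorial : ℝ) / ((a + b + 1).factorial : ℝ)

lemma Bnat_pos (a b : ℕ) : 0 < Bnat a b := by
  unfold Bnat
  have h1 := Nat.factorial_pos a
  have h2 := Nat.factorial_pos b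
  have h3 := Nat.factorial_pos (a + b + 1)
  positivity

lemma beta_step (a b : ℕ) :
    ((a : ℝ) + 1) * ∫ x in (0:ℝ)..1, x ^ a * (1 - x) ^ (b + 1)
      = ((b : ℝ) + 1) * ∫ x in (0:ℝ)..1, x ^ (a + 1) * (1 - x) ^ b := by
  have hint1 : IntervalIntegrable (fun x : ℝ => x ^ a * (1 - x) ^ (b + 1)) volume 0 1 := by
    apply Continuous.intervalIntegrable; fun_prop
  have hint2 : IntervalIntegrable (fun x : ℝ => x ^ (a + 1) * (1 - x) ^ b) volume 0 1 := by
    apply Continuous.intervalIntegrable; fun_prop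
  have key : ∫ x in (0:ℝ)..1,
      (((a : ℝ) + 1) * (x ^ a * (1 - x) ^ (b + 1)) - ((b : ℝ) + 1) * (x ^ (a + 1) * (1 - x) ^ b))
      = (fun x : ℝ => x ^ (a + 1) * (1 - x) ^ (b + 1)) 1
        - (fun x : ℝ => x ^ (a + 1) * (1 - x) ^ (b + 1)) 0 := by
    refine intervalIntegral.integral_eq_sub_of_hasDerivAt
      (f := fun x : ℝ => x ^ (a + 1) * (1 - x) ^ (b + 1)) (fun x _ => ?_) ?_
    · have h1 : HasDerivAt (fun y : ℝ => (1 - y) ^ (b + 1))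
          (((b : ℝ) + 1) * (1 - x) ^ b * (-1)) x := by
        have := ((hasDerivAt_pow (b + 1) (1 - x)).comp x ((hasDerivAt_id x).const_sub 1))
        simpa [Function.comp_def] using this
      have h2 := (hasDerivAt_pow (a + 1) x).fun_mul h1
      refine h2.congr_deriv ?_
      push_cast
      ring
    · apply Continuous.intervalIntegrable; fun_prop
  norm_num at key
  rw [intervalIntegral.integral_sub (hint1.const_mul _) (hint2.const_mul _),
    intervalIntegral.integral_const_mul, intervalIntegral.integral_const_mul] at key
  linarith [key]

lemma beta_val : ∀ (b a : ℕ), (∫ x in (0:ℝ)..1, x ^ a * (1 - x) ^ b) = Bnat a b := by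
  intro b
  induction b with
  | zero =>
    intro a
    simp only [pow_zero, mul_one, integral_pow]
    unfold Bnat
    have h : (a + 0 + 1).factorial = (a + 1) * a.factorial := by
      simp [Nat.factorial_succ]
    rw [h]
    have hfa : (0:ℝ) < (a.factorial : ℝ) := by
      exact_mod_cast Nat.factorial_pos a
    rw [Nat.factorial_zero]
    push_cast
    have ha : (0:ℝ) < (a:ℝ) + 1 := by positivity
    field_simp
    simp
  | succ b ih =>
    intro a
    have hstep := beta_step a b
    have ha : ((a : ℝ) + 1) ≠ 0 := by positivity
    have heq : (∫ x in (0:ℝ)..1, x ^ a * (1 - x) ^ (b + 1))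
        = ((b : ℝ) + 1) / ((a : ℝ) + 1) * Bnat (a + 1) b := by
      rw [← ih (a + 1)]
      field_simp
      linarith [hstep]
    rw [heq]
    unfold Bnat
    have e1 : (a + 1 + b + 1).factorial = (a + (b + 1) + 1).factorial := by ring_nf
    have e2 : ((a + 1).factorial : ℝ) = ((a:ℝ) + 1) * (a.factorial : ℝ) := by
      rw [Nat.factorial_succ]; push_cast; ring
    have e3 : ((b + 1).factorial : ℝ) = ((b:ℝ) + 1) * (b.factorial : ℝ) := by
      rw [Nat.factorial_succ]; push_cast; ring
    rw [e1, e2, e3]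
    have h4 : (0:ℝ) < ((a + (b + 1) + 1).factorial : ℝ) := by
      exact_mod_cast Nat.factorial_pos _
    field_simp

lemma beta_val_Icc (a b : ℕ) :
    (∫ x in Set.Icc (0:ℝ) 1, x ^ a * (1 - x) ^ b) = Bnat a b := by
  rw [integral_Icc_eq_integral_Ioc, ← intervalIntegral.integral_of_le zero_le_one]
  exact beta_val b a

lemma cube_prod_integral {n : ℕ} (g : Fin n → ℝ → ℝ) :
    (∫ x in Set.Icc (0 : Fin n → ℝ) 1, ∏ i, g i (x i))
      = ∏ i, ∫ t in Set.Icc (0:ℝ) 1, g i t := by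
  have hms : MeasurableSet (Set.Icc (0 : Fin n → ℝ) 1) := measurableSet_Icc
  rw [← integral_indicator hms]
  have hind : (Set.Icc (0 : Fin n → ℝ) 1).indicator (fun x => ∏ i, g i (x i))
      = fun x => ∏ i, (Set.Icc (0:ℝ) 1).indicator (g i) (x i) := by
    funext x
    by_cases hx : x ∈ Set.Icc (0 : Fin n → ℝ) 1
    · rw [Set.indicator_of_mem hx]
      rw [Set.mem_Icc] at hx
      refine Finset.prod_congr rfl fun i _ => (Set.indicator_of_mem ?_ _).symm
      exact Set.mem_Icc.mpr ⟨by simpa using hx.1 i, by simpa using hx.2 i⟩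
    · rw [Set.indicator_of_notMem hx]
      symm
      have hex : ∃ i, x i ∉ Set.Icc (0:ℝ) 1 := by
        by_contra hall
        push_neg at hall
        refine hx (Set.mem_Icc.mpr ⟨fun i => ?_, fun i => ?_⟩)
        · simpa using (Set.mem_Icc.mp (hall i)).1
        · simpa using (Set.mem_Icc.mp (hall i)).2
      obtain ⟨i, hi⟩ := hex
      exact Finset.prod_eq_zero (Finset.mem_univ i) (Set.indicator_of_notMem hi _)
  rw [hind,
    MeasureTheory.integral_fintype_prod_volume_eq_prod (f := fun i => (Set.Icc (0:ℝ) 1).indicator (g i))]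
  exact Finset.prod_congr rfl fun i _ => (integral_indicator measurableSet_Icc)

lemma cube_weight_integral {n : ℕ} (a b : Fin n → ℕ) :
    (∫ x in Set.Icc (0 : Fin n → ℝ) 1, ∏ i, x i ^ a i * (1 - x i) ^ b i)
      = ∏ i, Bnat (a i) (b i) := by
  rw [cube_prod_integral (g := fun i t => t ^ a i * (1 - t) ^ b i)]
  exact Finset.prod_congr rfl fun i _ => beta_val_Icc (a i) (b i)

lemma weight_continuous {n : ℕ} (a b : Fin n → ℕ) :
    Continuous fun x : Fin n → ℝ => ∏ i, x i ^ a i * (1 - x i) ^ b i :=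
  continuous_finset_prod _ fun i _ =>
    ((continuous_apply i).pow _).mul ((continuous_const.sub (continuous_apply i)).pow _)

lemma eval_continuous' {n : ℕ} (f : MvPolynomial (Fin n) ℝ) :
    Continuous fun x : Fin n → ℝ => eval x f := by
  have : (fun x : Fin n → ℝ => eval x f)
      = fun x => ∑ α ∈ f.support, f.coeff α * ∏ i, x i ^ α i := by
    funext x; exact eval_eq' x f
  rw [this]
  exact continuous_finset_sum _ fun α _ =>
    continuous_const.mul (continuous_finset_prod _ fun i _ => (continuous_apply i).pow _)

lemma cube_numerator {n : ℕ} (f : MvPolynomial (Fin n) ℝ) (η β : Fin n → ℕ) :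
    (∫ x in Set.Icc (0 : Fin n → ℝ) 1, eval x f * ∏ i, x i ^ η i * (1 - x i) ^ β i)
      = ∑ α ∈ f.support, f.coeff α * ∏ i, Bnat (α i + η i) (β i) := by
  have hrw : ∀ x : Fin n → ℝ, eval x f * ∏ i, x i ^ η i * (1 - x i) ^ β i
      = ∑ α ∈ f.support, f.coeff α * ∏ i, (x i ^ (α i + η i) * (1 - x i) ^ β i) := by
    intro x
    rw [eval_eq', Finset.sum_mul]
    refine Finset.sum_congr rfl fun α _ => ?_
    rw [mul_assoc, ← Finset.prod_mul_distrib]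
    congr 1
    refine Finset.prod_congr rfl fun i _ => ?_
    rw [pow_add]; ring
  simp_rw [hrw]
  rw [integral_finset_sum]
  · refine Finset.sum_congr rfl fun α _ => ?_
    rw [MeasureTheory.integral_const_mul,
      cube_weight_integral (fun i => α i + η i) β]
  · intro α _
    exact (continuous_const.mul (weight_continuous (fun i => α i + η i) β)).integrableOn_Icc

lemma ratio_lower {n : ℕ} (f : MvPolynomial (Fin n) ℝ) (xstar : Fin n → ℝ)
    (hmin : ∀ x ∈ Set.Icc (0 : Fin n → ℝ) 1, eval xstar f ≤ eval x f) (η β : Fin n → ℕ) :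
    eval xstar f ≤
      (∫ x in Set.Icc (0 : Fin n → ℝ) 1, eval x f * ∏ i, x i ^ η i * (1 - x i) ^ β i) /
      (∫ x in Set.Icc (0 : Fin n → ℝ) 1, ∏ i, x i ^ η i * (1 - x i) ^ β i) := by
  have hD := cube_weight_integral (n := n) η β
  have hDpos : 0 < ∫ x in Set.Icc (0 : Fin n → ℝ) 1, ∏ i, x i ^ η i * (1 - x i) ^ β i := by
    rw [hD]; exact Finset.prod_pos fun i _ => Bnat_pos _ _
  rw [le_div_iff₀ hDpos]
  have hw := weight_continuous (n := n) η β
  have hwn : ∀ x ∈ Set.Icc (0 : Fin n → ℝ) 1, 0 ≤ ∏ i, x i ^ η i * (1 - x i) ^ β i := by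
    intro x hxm
    refine Finset.prod_nonneg fun i _ => mul_nonneg (pow_nonneg ?_ _) (pow_nonneg ?_ _)
    · simpa using hxm.1 i
    · have h1 : x i ≤ 1 := by simpa using hxm.2 i
      linarith
  have key : (∫ x in Set.Icc (0 : Fin n → ℝ) 1,
        eval xstar f * ∏ i, x i ^ η i * (1 - x i) ^ β i)
      ≤ ∫ x in Set.Icc (0 : Fin n → ℝ) 1, eval x f * ∏ i, x i ^ η i * (1 - x i) ^ β i := by
    refine setIntegral_mono_on ((continuous_const.mul hw).integrableOn_Icc)
      (((eval_continuous' f).mul hw).integrableOn_Icc) measurableSet_Icc ?_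
    intro x hxm
    exact mul_le_mul_of_nonneg_right (hmin x hxm) (hwn x hxm)
  calc eval xstar f * ∫ x in Set.Icc (0 : Fin n → ℝ) 1, ∏ i, x i ^ η i * (1 - x i) ^ β i
      = ∫ x in Set.Icc (0 : Fin n → ℝ) 1,
          eval xstar f * ∏ i, x i ^ η i * (1 - x i) ^ β i := by
        rw [MeasureTheory.integral_const_mul]
    _ ≤ _ := key

lemma Bnat_ratio (η β : ℕ) : ∀ a : ℕ, Bnat (η + a) β
    = Bnat η β * ∏ j ∈ Finset.range a, (((η:ℝ) + 1 + j) / ((η:ℝ) + β + 2 + j)) := by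
  intro a
  induction a with
  | zero => simp
  | succ a ih =>
    rw [Finset.prod_range_succ, ← mul_assoc, ← ih]
    unfold Bnat
    have e1 : (η + (a+1)) = (η + a) + 1 := by ring
    rw [e1]
    have e2 : ((η + a + 1).factorial : ℝ) = ((η:ℝ) + a + 1) * ((η + a).factorial : ℝ) := by
      rw [Nat.factorial_succ]; push_cast; ring
    have e3 : (η + a + 1 + β + 1) = (η + a + β + 1) + 1 := by ring
    rw [e2, e3]
    have e4 : ((η + a + β + 1 + 1).factorial : ℝ)
        = ((η:ℝ) + a + β + 2) * ((η + a + β + 1).factorial : ℝ) := by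
      rw [Nat.factorial_succ]; push_cast; ring
    rw [e4]
    have h1 : (0:ℝ) < ((η + a + β + 1).factorial : ℝ) := by exact_mod_cast Nat.factorial_pos _
    have h2 : (0:ℝ) < ((η:ℝ) + a + β + 2) := by positivity
    have h3 : (0:ℝ) < ((η:ℝ) + (a:ℝ) + 1) := by positivity
    field_simp
    ring

lemma abs_prod_sub_prod {ι : Type*} (s : Finset ι) (a b : ι → ℝ)
    (ha : ∀ i ∈ s, a i ∈ Set.Icc (0:ℝ) 1) (hb : ∀ i ∈ s, b i ∈ Set.Icc (0:ℝ) 1) :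
    |∏ i ∈ s, a i - ∏ i ∈ s, b i| ≤ ∑ i ∈ s, |a i - b i| := by
  induction s using Finset.cons_induction with
  | empty => simp
  | cons x s hx ih =>
    rw [Finset.prod_cons, Finset.prod_cons, Finset.sum_cons]
    have hPa : ∏ i ∈ s, a i ∈ Set.Icc (0:ℝ) 1 := by
      constructor
      · exact Finset.prod_nonneg fun i hi => (ha i (Finset.mem_cons_of_mem hi)).1
      · exact Finset.prod_le_one (fun i hi => (ha i (Finset.mem_cons_of_mem hi)).1)
          (fun i hi => (ha i (Finset.mem_cons_of_mem hi)).2)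
    have hPb : ∏ i ∈ s, b i ∈ Set.Icc (0:ℝ) 1 := by
      constructor
      · exact Finset.prod_nonneg fun i hi => (hb i (Finset.mem_cons_of_mem hi)).1
      · exact Finset.prod_le_one (fun i hi => (hb i (Finset.mem_cons_of_mem hi)).1)
          (fun i hi => (hb i (Finset.mem_cons_of_mem hi)).2)
    have hax := ha x (Finset.mem_cons_self x s)
    have hbx := hb x (Finset.mem_cons_self x s)
    have ih' := ih (fun i hi => ha i (Finset.mem_cons_of_mem hi))
      (fun i hi => hb i (Finset.mem_cons_of_mem hi))
    calc |a x * ∏ i ∈ s, a i - b x * ∏ i ∈ s, b i|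
        = |a x * (∏ i ∈ s, a i - ∏ i ∈ s, b i) + (a x - b x) * ∏ i ∈ s, b i| := by ring_nf
      _ ≤ |a x * (∏ i ∈ s, a i - ∏ i ∈ s, b i)| + |(a x - b x) * ∏ i ∈ s, b i| := abs_add_le _ _
      _ ≤ 1 * |∏ i ∈ s, a i - ∏ i ∈ s, b i| + |a x - b x| * 1 := by
          rw [abs_mul, abs_mul]
          gcongr
          · rw [abs_of_nonneg hax.1]; exact hax.2
          · rw [abs_of_nonneg hPb.1]; exact hPb.2
      _ ≤ |a x - b x| + ∑ i ∈ s, |a i - b i| := by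
          rw [one_mul, mul_one]; linarith [ih']

lemma sum_ite_lt_fin (n r : ℕ) (hr : r ≤ n) :
    (∑ i : Fin n, (if (i:ℕ) < r then 1 else 0)) = r := by
  rw [Fin.sum_univ_eq_sum_range (fun i => if i < r then 1 else 0) n]
  rw [← Finset.sum_filter]
  have h : Finset.filter (fun i => i < r) (Finset.range n) = Finset.range r := by
    ext i
    simp only [Finset.mem_filter, Finset.mem_range]
    exact ⟨fun h => h.2, fun h => ⟨lt_of_lt_of_le h hr, h⟩⟩
  rw [h]
  simp

lemma factor_bound (x : ℝ) (hx0 : 0 ≤ x) (hx1 : x ≤ 1) (t η j d : ℕ)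
    (hη : (η:ℝ) ≤ x * t) (hη' : x * t < (η:ℝ) + 1) (hj : (j:ℝ) ≤ d)
    (T' : ℝ) (hT'pos : 0 < T') (hT't : T' ≤ (t:ℝ)) :
    |((η:ℝ) + 1 + j) / ((t:ℝ) + 2 + j) - x| ≤ (2*(d:ℝ) + 4) / T' := by
  have hD0 : (0:ℝ) < (t:ℝ) + 2 + j := by positivity
  have heq : ((η:ℝ)+1+j)/((t:ℝ)+2+j) - x
      = (((η:ℝ)+1+j) - x*((t:ℝ)+2+j))/((t:ℝ)+2+j) := by
    field_simp
  rw [heq, abs_div, abs_of_pos hD0]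
  have hnum : |((η:ℝ)+1+j) - x*((t:ℝ)+2+j)| ≤ 2*(d:ℝ) + 4 := by
    rw [abs_le]
    have hj0 : (0:ℝ) ≤ (j:ℝ) := Nat.cast_nonneg j
    have hd0 : (0:ℝ) ≤ (d:ℝ) := Nat.cast_nonneg d
    constructor <;> nlinarith [mul_nonneg hx0 hj0, mul_le_of_le_one_left hj0 hx1]
  exact div_le_div₀ (by positivity) hnum hT'pos (le_trans hT't (by linarith))


/-- The upper bound `f_k^H` on the hypercube `[0,1]^n`. -/
noncomputable def fkH (n : ℕ) (f : MvPolynomial (Fin n) ℝ) (k : ℕ) : ℝ :=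
  sInf { r : ℝ | ∃ η β : Fin n → ℕ, (∑ i, η i) + (∑ i, β i) = k ∧
    r = (∫ x in Set.Icc (0 : Fin n → ℝ) 1,
            eval x f * ∏ i, x i ^ η i * (1 - x i) ^ β i) /
        (∫ x in Set.Icc (0 : Fin n → ℝ) 1, ∏ i, x i ^ η i * (1 - x i) ^ β i) }

theorem fkH_rate_linear_of_rational_minimizer
    {n : ℕ} (hn : 1 ≤ n) (f : MvPolynomial (Fin n) ℝ) (xstar : Fin n → ℝ)
    (hx : xstar ∈ Set.Icc (0 : Fin n → ℝ) 1)
    (hmin : ∀ x ∈ Set.Icc (0 : Fin n → ℝ) 1, eval xstar f ≤ eval x f)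
    (hrat : ∀ i, ∃ q : ℚ, xstar i = (q : ℝ)) :
    ∃ (M : ℝ) (k₁ : ℕ), 0 < M ∧ 1 ≤ k₁ ∧ ∀ k : ℕ, k₁ ≤ k →
      fkH n f k - eval xstar f ≤ M / k := by
  classical
  set d := f.totalDegree with hd
  set L : ℝ := ∑ α ∈ f.support, |f.coeff α| with hLdef
  have hL0 : 0 ≤ L := Finset.sum_nonneg fun _ _ => abs_nonneg _
  set C : ℝ := 2 * (d:ℝ) + 4 with hCdef
  have hC0 : 0 < C := by positivity
  refine ⟨L * n * d * C * (2 * n) + 1, 2 * n, ?_, by omega, ?_⟩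
  · have h0 : (0:ℝ) ≤ L * n * d * C * (2 * n) := by positivity
    linarith
  intro k hk
  have hn0 : 0 < n := hn
  have hk0 : 0 < k := by omega
  have hkR : (0:ℝ) < k := by exact_mod_cast hk0
  -- construction of the degree vectors
  set m := k / n with hmdef
  have hdm : n * m + k % n = k := Nat.div_add_mod k n
  have hmod : k % n < n := Nat.mod_lt k hn0
  have hm2 : 2 ≤ m := by
    rw [hmdef]
    exact (Nat.le_div_iff_mul_le hn0).mpr (by omega)
  set t : Fin n → ℕ := fun i => m + (if (i:ℕ) < k % n then 1 else 0) with htdef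
  have htsum : (∑ i, t i) = k := by
    rw [htdef, Finset.sum_add_distrib, Finset.sum_const,
      sum_ite_lt_fin n (k % n) hmod.le]
    simp only [Finset.card_univ, Fintype.card_fin, smul_eq_mul]
    omega
  have htm : ∀ i, m ≤ t i := fun i => Nat.le_add_right _ _
  have hx0 : ∀ i, (0:ℝ) ≤ xstar i := fun i => by simpa using hx.1 i
  have hx1 : ∀ i, xstar i ≤ 1 := fun i => by simpa using hx.2 i
  set η : Fin n → ℕ := fun i => ⌊xstar i * t i⌋₊ with hηdef
  have hηfl : ∀ i, (η i : ℝ) ≤ xstar i * t i := fun i =>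
    Nat.floor_le (mul_nonneg (hx0 i) (Nat.cast_nonneg _))
  have hηfl' : ∀ i, xstar i * t i < (η i : ℝ) + 1 := fun i => Nat.lt_floor_add_one _
  have hηle : ∀ i, η i ≤ t i := by
    intro i
    have h1 : xstar i * t i ≤ ((t i : ℕ) : ℝ) := by
      nlinarith [hx1 i, (Nat.cast_nonneg (t i) : (0:ℝ) ≤ (t i : ℝ)), hx0 i]
    calc η i ≤ ⌊((t i : ℕ) : ℝ)⌋₊ := Nat.floor_mono h1
      _ = t i := Nat.floor_natCast _
  set β : Fin n → ℕ := fun i => t i - η i with hβdef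
  have hβ : ∀ i, η i + β i = t i := fun i => Nat.add_sub_cancel' (hηle i)
  have hsum : (∑ i, η i) + (∑ i, β i) = k := by
    rw [← Finset.sum_add_distrib]
    calc (∑ i, (η i + β i)) = ∑ i, t i := Finset.sum_congr rfl fun i _ => hβ i
      _ = k := htsum
  -- the concentration scale
  set T' : ℝ := (k:ℝ) / (2*n) with hT'def
  have hnR : (0:ℝ) < n := by exact_mod_cast hn0
  have hT'pos : 0 < T' := by rw [hT'def]; positivity
  have hk2nm : k ≤ 2 * (n * m) := by
    have hnm : n ≤ n * m := Nat.le_mul_of_pos_right n (by omega)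
    omega
  have hT't : ∀ i, T' ≤ (t i : ℝ) := by
    intro i
    have h1 : (k:ℝ) ≤ 2 * ((n:ℝ) * m) := by exact_mod_cast hk2nm
    have h2 : (m:ℝ) ≤ (t i : ℝ) := by exact_mod_cast htm i
    rw [hT'def, div_le_iff₀ (by positivity : (0:ℝ) < 2*(n:ℝ))]
    nlinarith
  -- exact value of the candidate ratio
  set N := ∫ x in Set.Icc (0 : Fin n → ℝ) 1,
      eval x f * ∏ i, x i ^ η i * (1 - x i) ^ β i with hNdef
  set D := ∫ x in Set.Icc (0 : Fin n → ℝ) 1,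
      ∏ i, x i ^ η i * (1 - x i) ^ β i with hDdef
  have hD : D = ∏ i, Bnat (η i) (β i) := by rw [hDdef]; exact cube_weight_integral η β
  have hDpos : 0 < ∏ i, Bnat (η i) (β i) := Finset.prod_pos fun i _ => Bnat_pos _ _
  set S : ℝ := ∑ α ∈ f.support, f.coeff α *
      ∏ i, ∏ j ∈ Finset.range (α i), (((η i:ℝ) + 1 + j) / ((t i:ℝ) + 2 + j)) with hSdef
  have hper : ∀ (α : Fin n →₀ ℕ) (i : Fin n), Bnat (α i + η i) (β i)
      = Bnat (η i) (β i) *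
        ∏ j ∈ Finset.range (α i), (((η i:ℝ) + 1 + j) / ((t i:ℝ) + 2 + j)) := by
    intro α i
    rw [add_comm (α i) (η i), Bnat_ratio (η i) (β i) (α i)]
    congr 1
    refine Finset.prod_congr rfl fun j _ => ?_
    have hc : ((η i:ℝ) + (β i:ℝ)) = (t i : ℝ) := by exact_mod_cast hβ i
    rw [show ((η i:ℝ) + (β i:ℝ) + 2 + (j:ℝ)) = ((t i:ℝ) + 2 + (j:ℝ)) by rw [hc]]
  have hNS : N = (∏ i, Bnat (η i) (β i)) * S := by
    rw [hNdef, cube_numerator f η β, hSdef, Finset.mul_sum]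
    refine Finset.sum_congr rfl fun α _ => ?_
    calc f.coeff α * ∏ i, Bnat (α i + η i) (β i)
        = f.coeff α * ∏ i, (Bnat (η i) (β i) *
            ∏ j ∈ Finset.range (α i), (((η i:ℝ) + 1 + j) / ((t i:ℝ) + 2 + j))) := by
          rw [Finset.prod_congr rfl fun i _ => hper α i]
      _ = (∏ i, Bnat (η i) (β i)) * (f.coeff α *
            ∏ i, ∏ j ∈ Finset.range (α i), (((η i:ℝ) + 1 + j) / ((t i:ℝ) + 2 + j))) := by
          rw [Finset.prod_mul_distrib]; ring
  have hratio : N / D = S := by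
    rw [hNS, hD]
    exact mul_div_cancel_left₀ _ (ne_of_gt hDpos)
  -- fkH is at most S
  have hBdd : BddBelow { r : ℝ | ∃ η β : Fin n → ℕ, (∑ i, η i) + (∑ i, β i) = k ∧
      r = (∫ x in Set.Icc (0 : Fin n → ℝ) 1,
              eval x f * ∏ i, x i ^ η i * (1 - x i) ^ β i) /
          (∫ x in Set.Icc (0 : Fin n → ℝ) 1, ∏ i, x i ^ η i * (1 - x i) ^ β i) } := by
    refine ⟨eval xstar f, ?_⟩
    rintro r ⟨η', β', -, rfl⟩
    exact ratio_lower f xstar hmin η' β'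
  have hmem : N / D ∈ { r : ℝ | ∃ η β : Fin n → ℕ, (∑ i, η i) + (∑ i, β i) = k ∧
      r = (∫ x in Set.Icc (0 : Fin n → ℝ) 1,
              eval x f * ∏ i, x i ^ η i * (1 - x i) ^ β i) /
          (∫ x in Set.Icc (0 : Fin n → ℝ) 1, ∏ i, x i ^ η i * (1 - x i) ^ β i) } :=
    ⟨η, β, hsum, by rw [hNdef, hDdef]⟩
  have h1 : fkH n f k ≤ S := by
    rw [← hratio]
    exact csInf_le hBdd hmem
  -- the estimate
  have hαd : ∀ α ∈ f.support, ∀ i, α i ≤ d := by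
    intro α hα i
    have h2 : α i ≤ α.sum fun _ e => e := by
      by_cases hi : i ∈ α.support
      · have h3 := Finset.single_le_sum (f := fun j => α j)
          (fun j _ => Nat.zero_le _) hi
        simpa [Finsupp.sum] using h3
      · simp [Finsupp.notMem_support_iff.mp hi]
    exact h2.trans (MvPolynomial.le_totalDegree hα)
  have hfac01 : ∀ (i : Fin n) (j : ℕ),
      ((η i:ℝ) + 1 + j) / ((t i:ℝ) + 2 + j) ∈ Set.Icc (0:ℝ) 1 := by
    intro i j
    have hD0 : (0:ℝ) < (t i:ℝ) + 2 + j := by positivity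
    constructor
    · positivity
    · rw [div_le_one hD0]
      have h2 : (η i : ℝ) ≤ (t i : ℝ) := by exact_mod_cast hηle i
      linarith
  have hr01 : ∀ (i : Fin n) (a : ℕ),
      (∏ j ∈ Finset.range a, (((η i:ℝ) + 1 + j) / ((t i:ℝ) + 2 + j))) ∈ Set.Icc (0:ℝ) 1 :=
    fun i a => ⟨Finset.prod_nonneg (fun j _ => (hfac01 i j).1),
      Finset.prod_le_one (fun j _ => (hfac01 i j).1) (fun j _ => (hfac01 i j).2)⟩
  have hxpow01 : ∀ (i : Fin n) (a : ℕ), xstar i ^ a ∈ Set.Icc (0:ℝ) 1 := fun i a =>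
    ⟨pow_nonneg (hx0 i) _, pow_le_one₀ (hx0 i) (hx1 i)⟩
  have hper_i : ∀ α ∈ f.support, ∀ i : Fin n,
      |(∏ j ∈ Finset.range (α i), (((η i:ℝ) + 1 + j) / ((t i:ℝ) + 2 + j))) - xstar i ^ (α i)|
        ≤ (d:ℝ) * (C / T') := by
    intro α hα i
    rw [show xstar i ^ (α i) = ∏ _j ∈ Finset.range (α i), xstar i by
      rw [Finset.prod_const, Finset.card_range]]
    refine le_trans (abs_prod_sub_prod (Finset.range (α i)) _ _ (fun j _ => hfac01 i j)
      (fun j _ => ⟨hx0 i, hx1 i⟩)) ?_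
    have hjb : ∀ j ∈ Finset.range (α i),
        |(((η i:ℝ) + 1 + j) / ((t i:ℝ) + 2 + j)) - xstar i| ≤ C / T' := by
      intro j hj
      have hjd : (j:ℝ) ≤ (d:ℝ) := by
        have h3 : j < α i := Finset.mem_range.mp hj
        exact_mod_cast le_of_lt (lt_of_lt_of_le h3 (hαd α hα i))
      have h4 := factor_bound (xstar i) (hx0 i) (hx1 i) (t i) (η i) j d
        (hηfl i) (hηfl' i) hjd T' hT'pos (hT't i)
      rw [hCdef]
      exact h4
    refine le_trans (Finset.sum_le_sum hjb) ?_
    rw [Finset.sum_const, Finset.card_range, nsmul_eq_mul]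
    have hCT : 0 ≤ C / T' := le_of_lt (by positivity)
    have h5 : ((α i : ℕ) : ℝ) ≤ (d:ℝ) := by exact_mod_cast hαd α hα i
    exact mul_le_mul_of_nonneg_right h5 hCT
  have hperα : ∀ α ∈ f.support,
      |(∏ i, ∏ j ∈ Finset.range (α i), (((η i:ℝ) + 1 + j) / ((t i:ℝ) + 2 + j)))
          - ∏ i, xstar i ^ α i| ≤ (n:ℝ) * ((d:ℝ) * (C / T')) := by
    intro α hα
    refine le_trans (abs_prod_sub_prod Finset.univ _ _ (fun i _ => hr01 i (α i))
      (fun i _ => hxpow01 i (α i))) ?_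
    refine le_trans (Finset.sum_le_sum fun i (_ : i ∈ Finset.univ) => hper_i α hα i) ?_
    rw [Finset.sum_const, Finset.card_univ, Fintype.card_fin, nsmul_eq_mul]
  have hF : eval xstar f = ∑ α ∈ f.support, f.coeff α * ∏ i, xstar i ^ α i := eval_eq' xstar f
  have hSF : |S - eval xstar f| ≤ L * ((n:ℝ) * ((d:ℝ) * (C / T'))) := by
    rw [hSdef, hF, ← Finset.sum_sub_distrib]
    refine le_trans (Finset.abs_sum_le_sum_abs _ _) ?_
    rw [hLdef, Finset.sum_mul]
    refine Finset.sum_le_sum fun α hα => ?_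
    rw [← mul_sub, abs_mul]
    exact mul_le_mul_of_nonneg_left (hperα α hα) (abs_nonneg _)
  have hfinal : fkH n f k - eval xstar f ≤ L * ((n:ℝ) * ((d:ℝ) * (C / T'))) := by
    have h2 : S - eval xstar f ≤ |S - eval xstar f| := le_abs_self _
    linarith
  refine le_trans hfinal ?_
  have hCT' : C / T' = C * (2*(n:ℝ)) / k := by
    rw [hT'def]
    field_simp
  rw [hCT', show L * ((n:ℝ) * ((d:ℝ) * (C * (2*(n:ℝ)) / k)))
      = (L * n * d * C * (2 * n)) / k by ring]
  have hnum : L * (n:ℝ) * d * C * (2 * n) ≤ L * n * d * C * (2 * n) + 1 := by linarith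
  exact div_le_div_of_nonneg_right hnum hkR.le
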